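/- Let j : [0,∞) → ℝ be continuous, let q : ℝ → ℝ be continuous and 1-periodic with ∫₀¹ q(t) dt = 0, and suppose ∫₀^∞ |j(t) − q(t)| dt < ∞. Let g ∈ C¹([0,1]) with g(0) = 1 and g(1) = 0. Then both limits lim_{L→∞} ∫₀^L g(t/L) j(t) dt and lim_{L→∞} ∫_L^{L+1} ( ∫₀^t j(s) ds ) dt exist and are equal; in particular the first limit does not depend on the choice of g. -/

import Mathlib

/-! Write `j = q + r` with `r` integrable on `(0, ∞)`, and let `Q` be the primitive of `q`, which
is periodic because `q` has mean zero; write `⟨Q⟩` for its mean. Against `g (t / L)` the `r`-part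
tends to `∫₀^∞ r` by dominated convergence. Substituting `t = L u` and integrating by parts turns
the `q`-part into `-∫₀¹ g' u Q (L u) du`, and `Q (L ·)` converges weakly to `⟨Q⟩` (integrate by
parts once more against polynomials, then use Weierstrass), so the `q`-part tends to
`-(g 1 - g 0) ⟨Q⟩ = ⟨Q⟩`. In the second definition `∫_L^{L+1} Q = ⟨Q⟩` by periodicity, while
`∫_L^{L+1} ∫₀ᵗ r → ∫₀^∞ r`. -/

open MeasureTheory Filter Set intervalIntegral

open Polynomial Topology

namespace Function.Periodic

variable {f : ℝ → ℝ} {T : ℝ}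

lemma exists_forall_abs_le (hf : Periodic f T) (hT : T ≠ 0) (hc : Continuous f) :
    ∃ C, ∀ x, |f x| ≤ C := by
  obtain ⟨C, hC⟩ := isBounded_iff_forall_norm_le.1 (hf.isBounded_of_continuous hT hc)
  exact ⟨C, fun x => hC _ (mem_range_self x)⟩

lemma primitive_of_integral_eq_zero (hf : Periodic f T) (hc : Continuous f)
    (h0 : ∫ x in 0..T, f x = 0) : Periodic (fun x => ∫ t in 0..x, f t) T := fun x => by
  simp only [hf.intervalIntegral_add_eq_add 0 x hc.intervalIntegrable, zero_add, h0, add_zero]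

end Function.Periodic

section Equidistribution

variable {P : ℝ → ℝ} {T : ℝ}

lemma tendsto_integral_polynomial_mul_comp_mul_of_integral_eq_zero (hP : Continuous P)
    (hper : Function.Periodic P T) (hT : T ≠ 0) (h0 : ∫ x in 0..T, P x = 0) (p : ℝ[X])
    (a b : ℝ) : Tendsto (fun L => ∫ u in a..b, p.eval u * P (L * u)) atTop (𝓝 0) := by
  set Φ : ℝ → ℝ := fun x => ∫ t in 0..x, P t
  have hΦ : ∀ x, HasDerivAt Φ (P x) x := fun x => (hP.integral_hasStrictDerivAt 0 x).hasDerivAt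
  have hΦc : Continuous Φ := continuous_iff_continuousAt.2 fun x => (hΦ x).continuousAt
  obtain ⟨M, hM⟩ := (hper.primitive_of_integral_eq_zero hP h0).exists_forall_abs_le hT hΦc
  obtain ⟨C, hC⟩ := (isCompact_uIcc (a := a) (b := b)).exists_bound_of_continuousOn
    p.derivative.continuous.continuousOn
  set B : ℝ → ℝ := fun L =>
    p.eval b * Φ (L * b) - p.eval a * Φ (L * a) - ∫ u in a..b, p.derivative.eval u * Φ (L * u)
  -- Integrating by parts against the bounded primitive `Φ (L * ·) / L` gains a factor `L⁻¹`.
  have hparts : ∀ L ≠ 0, ∫ u in a..b, p.eval u * P (L * u) = L⁻¹ * B L := by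
    intro L hL
    have hv : ∀ u, HasDerivAt (fun u => L⁻¹ * Φ (L * u)) (P (L * u)) u := fun u =>
      (((hΦ (L * u)).comp u ((hasDerivAt_id u).const_mul L)).const_mul L⁻¹).congr_deriv
        (by field_simp)
    rw [integral_mul_deriv_eq_deriv_mul (fun u _ => p.hasDerivAt u) (fun u _ => hv u)
      (p.derivative.continuous.intervalIntegrable a b)
      ((hP.comp (continuous_const_mul L)).intervalIntegrable a b)]
    simp only [B, mul_sub, ← intervalIntegral.integral_const_mul, mul_left_comm L⁻¹]
  have hB : ∀ L, ‖B L‖ ≤ |p.eval b| * M + |p.eval a| * M + C * M * |b - a| := by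
    intro L
    have hint : ‖∫ u in a..b, p.derivative.eval u * Φ (L * u)‖ ≤ C * M * |b - a| :=
      norm_integral_le_of_norm_le_const fun u hu => by
        rw [norm_mul]
        exact mul_le_mul (hC u (uIoc_subset_uIcc hu)) (hM _) (norm_nonneg _)
          ((norm_nonneg _).trans (hC u (uIoc_subset_uIcc hu)))
    refine (norm_sub_le _ _).trans (add_le_add ((norm_sub_le _ _).trans ?_) hint)
    simp only [norm_mul, Real.norm_eq_abs]
    gcongr <;> exact hM _
  refine (tendsto_inv_atTop_zero.zero_mul_isBoundedUnder_le
    (isBoundedUnder_of ⟨_, hB⟩)).congr' ?_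
  filter_upwards [eventually_ne_atTop 0] with L hL
  exact (hparts L hL).symm

lemma tendsto_integral_mul_comp_mul_of_integral_eq_zero (hP : Continuous P)
    (hper : Function.Periodic P T) (hT : T ≠ 0) (h0 : ∫ x in 0..T, P x = 0) {f : ℝ → ℝ}
    {a b : ℝ} (hab : a ≤ b) (hf : ContinuousOn f (Icc a b)) :
    Tendsto (fun L => ∫ u in a..b, f u * P (L * u)) atTop (𝓝 0) := by
  obtain ⟨M, hM⟩ := hper.exists_forall_abs_le hT hP
  have hM0 : 0 ≤ M := (abs_nonneg _).trans (hM 0)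
  rw [Metric.tendsto_nhds]
  intro ε hε
  set δ := ε / 2 / (M * (b - a) + 1)
  have hδ : 0 < δ := by have := sub_nonneg.2 hab; positivity
  obtain ⟨p, hp⟩ := exists_polynomial_near_of_continuousOn a b f hf δ hδ
  filter_upwards [Metric.tendsto_nhds.1
    (tendsto_integral_polynomial_mul_comp_mul_of_integral_eq_zero hP hper hT h0 p a b) (ε / 2)
    (half_pos hε)] with L hL
  rw [Real.dist_eq, sub_zero] at hL ⊢
  have hPL : Continuous fun u => P (L * u) := hP.comp (continuous_const_mul L)
  have happrox : |(∫ u in a..b, f u * P (L * u)) - ∫ u in a..b, p.eval u * P (L * u)|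
      ≤ δ * M * |b - a| := by
    have hfi : IntervalIntegrable (fun u => f u * P (L * u)) volume a b :=
      (hf.mul hPL.continuousOn).intervalIntegrable_of_Icc hab
    have hpi : IntervalIntegrable (fun u => p.eval u * P (L * u)) volume a b :=
      (p.continuous.mul hPL).intervalIntegrable a b
    rw [← integral_sub hfi hpi, ← Real.norm_eq_abs]
    refine norm_integral_le_of_norm_le_const fun u hu => ?_
    have hu' : u ∈ Icc a b := by rw [← uIcc_of_le hab]; exact uIoc_subset_uIcc hu
    rw [← sub_mul, norm_mul, Real.norm_eq_abs, abs_sub_comm]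
    exact mul_le_mul (hp u hu').le (hM _) (abs_nonneg _) hδ.le
  have hδM : δ * M * |b - a| ≤ ε / 2 := by
    rw [abs_of_nonneg (sub_nonneg.2 hab), mul_assoc]
    calc δ * (M * (b - a)) ≤ δ * (M * (b - a) + 1) := by gcongr; linarith
      _ = ε / 2 := div_mul_cancel₀ _ (by have := sub_nonneg.2 hab; positivity)
  calc |∫ u in a..b, f u * P (L * u)|
      ≤ |(∫ u in a..b, f u * P (L * u)) - ∫ u in a..b, p.eval u * P (L * u)|
        + |∫ u in a..b, p.eval u * P (L * u)| := by
          linarith [abs_sub_abs_le_abs_sub (∫ u in a..b, f u * P (L * u))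
            (∫ u in a..b, p.eval u * P (L * u))]
    _ < ε / 2 + ε / 2 := add_lt_add_of_le_of_lt (happrox.trans hδM) hL
    _ = ε := add_halves ε

lemma tendsto_integral_mul_comp_mul_of_periodic (hP : Continuous P)
    (hper : Function.Periodic P T) (hT : T ≠ 0) {f : ℝ → ℝ} {a b : ℝ} (hab : a ≤ b)
    (hf : ContinuousOn f (Icc a b)) :
    Tendsto (fun L => ∫ u in a..b, f u * P (L * u)) atTop
      (𝓝 ((∫ u in a..b, f u) * (T⁻¹ * ∫ x in 0..T, P x))) := by
  set m := T⁻¹ * ∫ x in 0..T, P x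
  have h0 : ∫ x in 0..T, (P x - m) = 0 := by
    rw [integral_sub (hP.intervalIntegrable _ _) intervalIntegrable_const,
      intervalIntegral.integral_const, smul_eq_mul, sub_zero, mul_inv_cancel_left₀ hT, sub_self]
  have hlim := (tendsto_integral_mul_comp_mul_of_integral_eq_zero (P := fun x => P x - m)
    (hP.sub continuous_const) (fun x => by simp only [hper x]) hT h0 hab hf).add_const
    ((∫ u in a..b, f u) * m)
  rw [zero_add] at hlim
  refine hlim.congr fun L => ?_
  have hPL : Continuous fun u => P (L * u) := hP.comp (continuous_const_mul L)
  rw [← intervalIntegral.integral_mul_const, ← intervalIntegral.integral_add]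
  · simp only [mul_sub, sub_add_cancel]
  · exact (hf.mul (hPL.sub continuous_const).continuousOn).intervalIntegrable_of_Icc hab
  · exact (hf.mul continuousOn_const).intervalIntegrable_of_Icc hab

end Equidistribution

lemma intervalIntegrable_comp_div_mul {g r : ℝ → ℝ} {L : ℝ} (hg : ContinuousOn g (Icc 0 1))
    (hL : 0 < L) (hr : IntegrableOn r (Ioc 0 L)) :
    IntervalIntegrable (fun t => g (t / L) * r t) volume 0 L := by
  have hgL : ContinuousOn (fun t => g (t / L)) (Icc 0 L) :=
    hg.comp (continuous_id.div_const L).continuousOn fun t ht =>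
      ⟨div_nonneg ht.1 hL.le, (div_le_one hL).2 ht.2⟩
  exact (intervalIntegrable_iff_integrableOn_Ioc_of_le hL.le).2 <|
    hr.continuousOn_mul_of_subset hgL isCompact_Icc measurableSet_Ioc Ioc_subset_Icc_self

lemma tendsto_integral_comp_div_mul_of_periodic {q : ℝ → ℝ} {T : ℝ} (hq : Continuous q)
    (hper : Function.Periodic q T) (hT : T ≠ 0) (h0 : ∫ x in 0..T, q x = 0) {g : ℝ → ℝ}
    (hg : ContDiffOn ℝ 1 g (Icc 0 1)) (hg1 : g 1 = 0) :
    Tendsto (fun L => ∫ t in 0..L, g (t / L) * q t) atTop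
      (𝓝 (g 0 * (T⁻¹ * ∫ x in 0..T, ∫ s in 0..x, q s))) := by
  set Q : ℝ → ℝ := fun x => ∫ s in 0..x, q s
  set g' := derivWithin g (Icc 0 1)
  have hQ : ∀ x, HasDerivAt Q (q x) x := fun x => (hq.integral_hasStrictDerivAt 0 x).hasDerivAt
  have hQc : Continuous Q := continuous_iff_continuousAt.2 fun x => (hQ x).continuousAt
  have hg'c : ContinuousOn g' (Icc 0 1) :=
    hg.continuousOn_derivWithin (uniqueDiffOn_Icc one_pos) le_rfl
  have hgg' : ∀ u ∈ uIcc 0 1, HasDerivWithinAt g (g' u) (uIcc 0 1) u := by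
    rw [uIcc_of_le zero_le_one]
    exact fun u hu => ((hg.differentiableOn one_ne_zero) u hu).hasDerivWithinAt
  -- After substituting `t = L * u`, integration by parts against `Q (L * ·)` has no boundary
  -- terms, because `g 1 = 0` and `Q 0 = 0`.
  have hparts : ∀ L ≠ 0, ∫ t in 0..L, g (t / L) * q t = -∫ u in 0..1, g' u * Q (L * u) := by
    intro L hL
    have hv : ∀ u ∈ uIcc (0 : ℝ) 1, HasDerivWithinAt (fun u => Q (L * u)) (L * q (L * u))
        (uIcc 0 1) u := fun u _ =>
      ((hQ (L * u)).comp u ((hasDerivAt_id u).const_mul L)).hasDerivWithinAt.congr_deriv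
        (by ring)
    have hsubst := smul_integral_comp_mul_left (a := 0) (b := 1) (fun t => g (t / L) * q t) L
    simp only [mul_zero, mul_one, mul_div_cancel_left₀ _ hL, smul_eq_mul] at hsubst
    rw [← hsubst, ← intervalIntegral.integral_const_mul]
    simp only [mul_left_comm L]
    rw [integral_mul_deriv_eq_deriv_mul_of_hasDerivWithinAt hgg' hv
      (hg'c.intervalIntegrable_of_Icc zero_le_one)
      ((continuous_const.mul (hq.comp (continuous_const_mul L))).intervalIntegrable 0 1)]
    simp [Q, hg1]
  have hlim := (tendsto_integral_mul_comp_mul_of_periodic hQc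
    (hper.primitive_of_integral_eq_zero hq h0) hT zero_le_one hg'c).neg
  rw [integral_derivWithin_Icc_of_contDiffOn_Icc hg zero_le_one, hg1, zero_sub, neg_mul,
    neg_neg] at hlim
  refine hlim.congr' ?_
  filter_upwards [eventually_ne_atTop 0] with L hL
  exact (hparts L hL).symm

lemma tendsto_integral_comp_div_mul_of_integrableOn {g r : ℝ → ℝ}
    (hg : ContinuousOn g (Icc 0 1)) (hr : IntegrableOn r (Ioi 0)) :
    Tendsto (fun L => ∫ t in 0..L, g (t / L) * r t) atTop (𝓝 (g 0 * ∫ t in Ioi 0, r t)) := by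
  obtain ⟨C, hC⟩ := isCompact_Icc.exists_bound_of_continuousOn hg
  have hC0 : 0 ≤ C := (norm_nonneg _).trans (hC 0 (left_mem_Icc.2 zero_le_one))
  set F : ℝ → ℝ → ℝ := fun L => (Ioc 0 L).indicator fun t => g (t / L) * r t
  have hF : ∀ L > 0, ∫ t in 0..L, g (t / L) * r t = ∫ t in Ioi 0, F L t := fun L hL => by
    rw [integral_of_le hL.le, setIntegral_indicator measurableSet_Ioc,
      inter_eq_self_of_subset_right Ioc_subset_Ioi_self]
  rw [← MeasureTheory.integral_const_mul]
  refine (tendsto_integral_filter_of_dominated_convergence (F := F) (fun t => C * ‖r t‖) ?_ ?_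
    (hr.norm.const_mul C) ?_).congr' ?_
  · filter_upwards [eventually_gt_atTop 0] with L hL
    exact ((intervalIntegrable_comp_div_mul hg hL
      (hr.mono_set Ioc_subset_Ioi_self)).1.integrable_indicator measurableSet_Ioc).integrableOn.1
  · filter_upwards [eventually_gt_atTop 0] with L hL
    refine ae_of_all _ fun t => ?_
    by_cases ht : t ∈ Ioc 0 L
    · simp only [F, indicator_of_mem ht, norm_mul]
      exact mul_le_mul_of_nonneg_right
        (hC _ ⟨div_nonneg ht.1.le hL.le, (div_le_one hL).2 ht.2⟩) (norm_nonneg _)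
    · simp only [F, indicator_of_notMem ht, norm_zero]
      positivity
  · filter_upwards [ae_restrict_mem measurableSet_Ioi] with t (ht : 0 < t)
    have hdiv : Tendsto (fun L => t / L) atTop (𝓝[Icc 0 1] 0) := by
      refine tendsto_nhdsWithin_iff.2 ⟨tendsto_const_nhds.div_atTop tendsto_id, ?_⟩
      filter_upwards [eventually_ge_atTop t] with L hL
      exact ⟨div_nonneg ht.le (ht.trans_le hL).le, (div_le_one (ht.trans_le hL)).2 hL⟩
    refine (((hg 0 (left_mem_Icc.2 zero_le_one)).tendsto.comp hdiv).mul_const (r t)).congr' ?_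
    filter_upwards [eventually_ge_atTop t] with L hL
    exact (indicator_of_mem (show t ∈ Ioc 0 L from ⟨ht, hL⟩) fun t => g (t / L) * r t).symm
  · filter_upwards [eventually_gt_atTop 0] with L hL
    exact (hF L hL).symm

lemma MeasureTheory.IntegrableOn.intervalIntegrable_primitive {r : ℝ → ℝ} {a b c : ℝ}
    (hr : IntegrableOn r (Ioi a)) (hb : a ≤ b) (hc : a ≤ c) :
    IntervalIntegrable (fun x => ∫ t in a..x, r t) volume b c := by
  have hi : IntervalIntegrable r volume a (max b c) :=
    (intervalIntegrable_iff_integrableOn_Ioc_of_le (le_max_of_le_left hb)).2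
      (hr.mono_set Ioc_subset_Ioi_self)
  exact ((continuousOn_primitive_interval' hi left_mem_uIcc).mono (uIcc_subset_uIcc
    (mem_uIcc_of_le hb (le_max_left b c)) (mem_uIcc_of_le hc (le_max_right b c)))).intervalIntegrable

lemma tendsto_integral_add_one_of_tendsto {f : ℝ → ℝ} {c : ℝ} (hf : Tendsto f atTop (𝓝 c))
    (hfi : ∀ᶠ L in atTop, IntervalIntegrable f volume L (L + 1)) :
    Tendsto (fun L => ∫ t in L..L + 1, f t) atTop (𝓝 c) := by
  rw [Metric.tendsto_nhds] at hf ⊢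
  intro ε hε
  obtain ⟨N, hN⟩ := eventually_atTop.1 (hf (ε / 2) (half_pos hε))
  filter_upwards [eventually_ge_atTop N, hfi] with L hL hLi
  have hsub : (∫ t in L..L + 1, f t) - c = ∫ t in L..L + 1, (f t - c) := by
    rw [integral_sub hLi intervalIntegrable_const, intervalIntegral.integral_const,
      add_sub_cancel_left, one_smul]
  rw [Real.dist_eq, hsub, ← Real.norm_eq_abs]
  calc ‖∫ t in L..L + 1, (f t - c)‖ ≤ ε / 2 * |L + 1 - L| :=
        norm_integral_le_of_norm_le_const fun t ht => by
          rw [uIoc_of_le (by linarith)] at ht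
          exact (hN t (hL.trans ht.1.le)).le
    _ < ε := by rw [add_sub_cancel_left, abs_one, mul_one]; exact half_lt_self hε

theorem total_edge_current_two_definitions_general
    (j : ℝ → ℝ)
    (q : ℝ → ℝ) (hq : Continuous q) (hqper : ∀ t : ℝ, q (t + 1) = q t)
    (hqavg : (∫ t in (0:ℝ)..1, q t) = 0)
    (hint : IntegrableOn (fun t => j t - q t) (Set.Ici (0:ℝ)))
    (g : ℝ → ℝ) (hg : ContDiffOn ℝ 1 g (Set.Icc (0:ℝ) 1))
    (hg0 : g 0 = 1) (hg1 : g 1 = 0) :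
    ∃ c : ℝ,
      Tendsto (fun L : ℝ => ∫ t in (0:ℝ)..L, g (t / L) * j t) atTop (nhds c) ∧
      Tendsto (fun L : ℝ => ∫ t in L..(L + 1), (∫ s in (0:ℝ)..t, j s)) atTop (nhds c) := by
  set r := fun t => j t - q t
  have hr : IntegrableOn r (Ioi 0) := hint.mono_set Ioi_subset_Ici_self
  set Q := fun x => ∫ s in 0..x, q s
  set R := fun x => ∫ s in 0..x, r s
  have hQper : Function.Periodic Q 1 :=
    Function.Periodic.primitive_of_integral_eq_zero hqper hq hqavg
  refine ⟨(∫ x in 0..1, Q x) + ∫ t in Ioi 0, r t, ?_, ?_⟩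
  · have hlim := (tendsto_integral_comp_div_mul_of_periodic hq hqper one_ne_zero hqavg hg
      hg1).add (tendsto_integral_comp_div_mul_of_integrableOn hg.continuousOn hr)
    simp only [hg0, inv_one, one_mul] at hlim
    refine hlim.congr' ?_
    filter_upwards [eventually_gt_atTop 0] with L hL
    rw [← integral_add (intervalIntegrable_comp_div_mul hg.continuousOn hL hq.integrableOn_Ioc)
      (intervalIntegrable_comp_div_mul hg.continuousOn hL (hr.mono_set Ioc_subset_Ioi_self))]
    simp only [r, mul_sub, add_sub_cancel]
  · have hRi : ∀ L ≥ (0 : ℝ), IntervalIntegrable R volume L (L + 1) := fun L hL =>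
      hr.intervalIntegrable_primitive hL (by linarith)
    have hR : Tendsto R atTop (𝓝 (∫ t in Ioi 0, r t)) :=
      intervalIntegral_tendsto_integral_Ioi 0 hr tendsto_id
    refine ((tendsto_integral_add_one_of_tendsto hR ((eventually_ge_atTop 0).mono hRi)).const_add
      _).congr' ?_
    filter_upwards [eventually_ge_atTop 0] with L hL
    rw [← zero_add (1 : ℝ), ← hQper.intervalIntegral_add_eq L 0, zero_add,
      ← integral_add ((continuous_primitive hq.intervalIntegrable 0).intervalIntegrable _ _)
        (hRi L hL)]
    refine integral_congr fun t ht => ?_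
    rw [uIcc_of_le (by linarith)] at ht
    rw [← integral_add (hq.intervalIntegrable _ _) ((intervalIntegrable_iff_integrableOn_Ioc_of_le
      (hL.trans ht.1)).2 (hr.mono_set Ioc_subset_Ioi_self))]
    exact integral_congr fun s _ => add_sub_cancel (q s) (j s)

/-- **Equivalence of the two definitions of the total edge current.**
If `j : [0,∞) → ℝ` is continuous and approaches, in the `L¹` sense, a continuous
`1`-periodic function `q` with vanishing mean, then for any `g ∈ C¹([0,1])` with
`g 0 = 1`, `g 1 = 0`, the limits `lim_{L→∞} ∫₀ᴸ g(t/L) j(t) dt` and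
`lim_{L→∞} ∫_L^{L+1} (∫₀ᵗ j) dt` both exist and are equal; in particular the first
limit is independent of `g`. -/
theorem total_edge_current_two_definitions
    (j : ℝ → ℝ) (hj : ContinuousOn j (Set.Ici (0:ℝ)))
    (q : ℝ → ℝ) (hq : Continuous q) (hqper : ∀ t : ℝ, q (t + 1) = q t)
    (hqavg : (∫ t in (0:ℝ)..1, q t) = 0)
    (hint : IntegrableOn (fun t => j t - q t) (Set.Ici (0:ℝ)))
    (g : ℝ → ℝ) (hg : ContDiffOn ℝ 1 g (Set.Icc (0:ℝ) 1))
    (hg0 : g 0 = 1) (hg1 : g 1 = 0) :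
    ∃ c : ℝ,
      Tendsto (fun L : ℝ => ∫ t in (0:ℝ)..L, g (t / L) * j t) atTop (nhds c) ∧
      Tendsto (fun L : ℝ => ∫ t in L..(L + 1), (∫ s in (0:ℝ)..t, j s)) atTop (nhds c) :=
  total_edge_current_two_definitions_general j q hq hqper hqavg hint g hg hg0 hg1
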